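/- Let E be a vector lattice such that the canonical embedding Q_E : E → E^~~ is a lattice embedding and Q_E(E) is order dense in E^~~. If E is b-Dedekind complete and every order bounded linear functional on E is order continuous (E^~ = E_n^~), then E is perfect, i.e. the canonical map from E into (E_n^~)_n^~ is a lattice isomorphism onto (E_n^~)_n^~. -/

import Mathlib

/-!
Surjectivity of `Q_E` is the heart of the matter: with `E^~ = E_n^~` it makes the evaluation map
`E → (E_n^~)_n^~ = E^~~` bijective. For `Ψ ≥ 0` in `E^~~`, `b`-Dedekind completeness gives
`s = sup {x ≥ 0 | Q x ≤ Ψ}`. If `Q s ≰ Ψ`, order density puts some `Q x > 0` below `(Q s - Ψ)⁺`,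
and then `s - x` is a smaller upper bound; if `Ψ ≰ Q s`, some `Q x > 0` below `Ψ - Q s` puts
`s + x` into the set. Positive parts in `E^~` and `E^~~` come from the Riesz–Kantorovich formula
`f⁺ x = sup f [0, x]`, which only needs the Riesz decomposition property one level down.
Evaluations are order continuous on `E_n^~` because a decreasing net of positive functionals with
infimum `0` decreases to `0` pointwise: its pointwise infimum on the positive cone is additive,
hence a functional below the net.
-/

open Set

noncomputable section

/-- A subset of a type with an order is order bounded. -/
def OrdBdd {V : Type*} [LE V] (S : Set V) : Prop :=
  ∃ a b : V, ∀ x ∈ S, a ≤ x ∧ x ≤ b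

variable (V : Type*) [AddCommGroup V] [Module ℝ V] [Preorder V]

/-- The order dual `V^~` of an ordered vector space `V`: the submodule of those linear
functionals mapping order bounded sets to (order) bounded sets. -/
def obDual : Submodule ℝ (V →ₗ[ℝ] ℝ) where
  carrier := {f | ∀ S : Set V, OrdBdd S → OrdBdd (f '' S)}
  zero_mem' := by
    intro S _
    exact ⟨0, 0, by rintro _ ⟨x, hx, rfl⟩; simp⟩
  add_mem' := by
    intro f g hf hg S hS
    obtain ⟨a, b, hab⟩ := hf S hS
    obtain ⟨c, d, hcd⟩ := hg S hS
    refine ⟨a + c, b + d, ?_⟩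
    rintro _ ⟨x, hx, rfl⟩
    have h1 := hab (f x) ⟨x, hx, rfl⟩
    have h2 := hcd (g x) ⟨x, hx, rfl⟩
    simp only [LinearMap.add_apply]
    constructor <;> linarith [h1.1, h1.2, h2.1, h2.2]
  smul_mem' := by
    intro c f hf S hS
    obtain ⟨a, b, hab⟩ := hf S hS
    refine ⟨-(|c| * max |a| |b|), |c| * max |a| |b|, ?_⟩
    rintro _ ⟨x, hx, rfl⟩
    obtain ⟨h1a, h1b⟩ := hab (f x) ⟨x, hx, rfl⟩
    have hfx : |f x| ≤ max |a| |b| := by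
      refine abs_le.2 ⟨?_, ?_⟩
      · have h := neg_abs_le a
        have h' := le_max_left |a| |b|
        linarith
      · have h := le_abs_self b
        have h' := le_max_right |a| |b|
        linarith
    have habs : |(c • f) x| ≤ |c| * max |a| |b| := by
      simp only [LinearMap.smul_apply, smul_eq_mul, abs_mul]
      exact mul_le_mul_of_nonneg_left hfx (abs_nonneg c)
    exact abs_le.1 habs

/-- The order on the order dual: `f ≤ g` iff `f x ≤ g x` for every `0 ≤ x`. -/
instance obDualPreorder : Preorder ↥(obDual V) where
  le f g := ∀ x : V, 0 ≤ x → (f : V →ₗ[ℝ] ℝ) x ≤ (g : V →ₗ[ℝ] ℝ) x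
  le_refl f x _ := le_rfl
  le_trans f g h h1 h2 x hx := (h1 x hx).trans (h2 x hx)

/-- The order bidual `V^~~` of `V`. -/
abbrev Bidual := ↥(obDual ↥(obDual V))

variable {V}

/-- Evaluation at `x` as a linear functional on the order dual. -/
def evalMap (x : V) : ↥(obDual V) →ₗ[ℝ] ℝ where
  toFun f := (f : V →ₗ[ℝ] ℝ) x
  map_add' f g := by simp
  map_smul' c f := by simp

instance obDualAddCommGroup : AddCommGroup ↥(obDual V) := Submodule.addCommGroup _

variable (E : Type*) [AddCommGroup E] [Module ℝ E] [Lattice E]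
  [CovariantClass E E (· + ·) (· ≤ ·)]

/-- The canonical evaluation map `Q_E : E → E^~~`. -/
def QE (x : E) : Bidual E :=
  ⟨evalMap x, by
    intro S hS
    obtain ⟨φ, ψ, h⟩ := hS
    refine ⟨(φ : E →ₗ[ℝ] ℝ) (x ⊔ 0) - (ψ : E →ₗ[ℝ] ℝ) (-x ⊔ 0),
            (ψ : E →ₗ[ℝ] ℝ) (x ⊔ 0) - (φ : E →ₗ[ℝ] ℝ) (-x ⊔ 0), ?_⟩
    rintro _ ⟨f, hf, rfl⟩
    obtain ⟨hφf, hfψ⟩ := h f hf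
    have hx1 : (0 : E) ≤ x ⊔ 0 := le_sup_right
    have hx2 : (0 : E) ≤ -x ⊔ 0 := le_sup_right
    have hdecomp : (f : E →ₗ[ℝ] ℝ) x
        = (f : E →ₗ[ℝ] ℝ) (x ⊔ 0) - (f : E →ₗ[ℝ] ℝ) (-x ⊔ 0) := by
      rw [← map_sub]
      congr 1
      have := posPart_sub_negPart x
      simpa [posPart, negPart] using this.symm
    have h1 := hφf _ hx1
    have h2 := hfψ _ hx1
    have h3 := hφf _ hx2
    have h4 := hfψ _ hx2
    have hev : evalMap x f = (f : E →ₗ[ℝ] ℝ) x := rfl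
    rw [hev, hdecomp]
    exact ⟨by linarith, by linarith⟩⟩

/-- `A ⊆ E` is `b`-order bounded: its canonical image in `E^~~` is order bounded. -/
def BOrdBddSet (A : Set E) : Prop := OrdBdd (QE E '' A)

/-- `Q_E` is an (injective) lattice embedding of `E` into `E^~~`. -/
def QLatticeEmbedding : Prop :=
  Function.Injective (QE E) ∧ (∀ x y : E, x ≤ y ↔ QE E x ≤ QE E y) ∧
    ∀ x y : E, IsLUB {QE E x, QE E y} (QE E (x ⊔ y))

/-- `E` is `b`-Dedekind complete: every nonempty subset of `E` bounded above by an element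
of `E^~~` has a supremum in `E`. -/
def BDedekindComplete : Prop :=
  ∀ S : Set E, S.Nonempty → (∃ φ : Bidual E, ∀ a ∈ S, QE E a ≤ φ) → ∃ s : E, IsLUB S s

variable {E}

/-- The net `x` in `E` is `b`-order convergent to `a`: some net in `E^~~` with the same
index set decreases to `0` in `E^~~` and dominates `|x i - a|` (canonically embedded). -/
def BOConv {ι : Type*} [Preorder ι] (x : ι → E) (a : E) : Prop :=
  ∃ y : ι → Bidual E, Antitone y ∧ IsGLB (Set.range y) 0 ∧ ∀ i, QE E (|x i - a|) ≤ y i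

/-- `x_α ↓_b 0` : the net `x` is decreasing and `inf_α x_α = 0` holds in `E^~~`. -/
def DownB0 {ι : Type*} [Preorder ι] (x : ι → E) : Prop :=
  Antitone x ∧ IsGLB (Set.range fun i => QE E (x i)) 0

section Operators

variable {G : Type*} [AddCommGroup G] [Module ℝ G] [Lattice G]
  [CovariantClass G G (· + ·) (· ≤ ·)]

/-- `T` is an order bounded operator. -/
def OrderBddOp (T : E →ₗ[ℝ] G) : Prop := ∀ A : Set E, OrdBdd A → OrdBdd (T '' A)

/-- `T` is a `b`-order bounded operator: it maps `b`-order bounded sets to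
`b`-order bounded sets. -/
def BOrdBddOp (T : E →ₗ[ℝ] G) : Prop := ∀ A : Set E, BOrdBddSet E A → BOrdBddSet G (T '' A)

/-- `T` is `b`-order continuous: `x_α →bo 0` in `E` implies `T x_α →bo 0` in `G`. -/
def BOCont (T : E →ₗ[ℝ] G) : Prop :=
  ∀ (ι : Type*) [Preorder ι] [Nonempty ι] [IsDirected ι (· ≤ ·)] (x : ι → E),
    BOConv x 0 → BOConv (fun i => T (x i)) 0

end Operators

universe u v

/-- `f ∈ E^~` is order continuous: `x_α ↓ 0` in `E` implies `inf_α |f(x_α)| = 0`. -/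
def OContFunctional {E : Type u} [AddCommGroup E] [Module ℝ E] [Lattice E]
    (f : ↥(obDual E)) : Prop :=
  ∀ (ι : Type v) [Preorder ι] [Nonempty ι] [IsDirected ι (· ≤ ·)] (x : ι → E),
    Antitone x → IsGLB (Set.range x) 0 →
    IsGLB (Set.range fun i => |(f : E →ₗ[ℝ] ℝ) (x i)|) 0

/-- `E_n^~`, the set of order continuous order bounded functionals on `E`. -/
def EnSet (E : Type u) [AddCommGroup E] [Module ℝ E] [Lattice E] : Set ↥(obDual E) :=
  {f | OContFunctional.{u, v} f}

/-- The zero functional, as an element of `E_n^~`. -/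
def zeroEn (E : Type u) [AddCommGroup E] [Module ℝ E] [Lattice E] : ↥(EnSet.{u, v} E) :=
  ⟨0, by
    intro ι _ _ _ x _ _
    have hz : (fun i => |((0 : ↥(obDual E)) : E →ₗ[ℝ] ℝ) (x i)|) = fun _ : ι => (0 : ℝ) := by
      funext i; simp
    rw [hz, Set.range_const]
    exact isGLB_singleton⟩

/-- A function `φ : E_n^~ → ℝ` is an element of `(E_n^~)_n^~`: it is linear (expressed via
the coercion to `E^~`), order bounded, and order continuous on `E_n^~`. -/
def IsEnBidualFunctional (E : Type u) [AddCommGroup E] [Module ℝ E] [Lattice E]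
    (φ : ↥(EnSet.{u, v} E) → ℝ) : Prop :=
  (∀ f g h : ↥(EnSet.{u, v} E),
      (h : ↥(obDual E)) = (f : ↥(obDual E)) + (g : ↥(obDual E)) → φ h = φ f + φ g) ∧
  (∀ (c : ℝ) (f g : ↥(EnSet.{u, v} E)),
      (g : ↥(obDual E)) = c • (f : ↥(obDual E)) → φ g = c * φ f) ∧
  (∀ S : Set ↥(EnSet.{u, v} E), OrdBdd S → OrdBdd (φ '' S)) ∧
  (∀ (ι : Type v) [Preorder ι] [Nonempty ι] [IsDirected ι (· ≤ ·)]
      (x : ι → ↥(EnSet.{u, v} E)),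
      Antitone x → IsGLB (Set.range x) (zeroEn.{u, v} E) →
      IsGLB (Set.range fun i => |φ (x i)|) 0)

/-- The collection `(E_n^~)_n^~`. -/
def EnBidualSet (E : Type u) [AddCommGroup E] [Module ℝ E] [Lattice E] :
    Set (↥(EnSet.{u, v} E) → ℝ) :=
  {φ | IsEnBidualFunctional.{u, v} E φ}

/-- The canonical evaluation map `E → (E_n^~)_n^~`. -/
def evalN (E : Type u) [AddCommGroup E] [Module ℝ E] [Lattice E]
    (x : E) : ↥(EnSet.{u, v} E) → ℝ :=
  fun f => ((f : ↥(obDual E)) : E →ₗ[ℝ] ℝ) x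


open scoped Pointwise

def HasPosParts (G : Type*) [Zero G] [Preorder G] : Prop :=
  ∀ a : G, ∃ p, IsLUB {a, 0} p

theorem hasPosParts_of_lattice {G : Type*} [Zero G] [Lattice G] : HasPosParts G :=
  fun _ => ⟨_, isLUB_pair⟩

theorem mem_upperBounds_pair {α : Type*} [Preorder α] {a b p : α} :
    p ∈ upperBounds {a, b} ↔ a ≤ p ∧ b ≤ p := by
  simp [upperBounds_insert]

section OrderedGroup

variable {G : Type*} [AddCommGroup G] [Preorder G] [AddLeftMono G]

theorem HasPosParts.exists_sub (hG : HasPosParts G) (a : G) :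
    ∃ b c : G, 0 ≤ b ∧ 0 ≤ c ∧ b - c = a := by
  obtain ⟨p, hp⟩ := hG a
  obtain ⟨hap, h0p⟩ := mem_upperBounds_pair.1 hp.1
  exact ⟨p, p - a, h0p, sub_nonneg.2 hap, sub_sub_cancel p a⟩

theorem HasPosParts.Icc_zero_add (hG : HasPosParts G) {a b : G} (ha : 0 ≤ a) (hb : 0 ≤ b) :
    Icc 0 (a + b) = Icc 0 a + Icc 0 b := by
  refine subset_antisymm ?_ (by simpa using Icc_add_Icc_subset (0 : G) a 0 b)
  rintro u ⟨hu0, hu⟩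
  -- `u = (u - b)⁺ + (u - (u - b)⁺)`
  obtain ⟨p, hp⟩ := hG (u - b)
  obtain ⟨hup, h0p⟩ := mem_upperBounds_pair.1 hp.1
  have hpa : p ≤ a := hp.2 (mem_upperBounds_pair.2 ⟨sub_le_iff_le_add.2 hu, ha⟩)
  have hpu : p ≤ u := hp.2 (mem_upperBounds_pair.2 ⟨sub_le_self u hb, hu0⟩)
  exact ⟨p, ⟨h0p, hpa⟩, u - p, ⟨sub_nonneg.2 hpu, sub_le_comm.1 hup⟩, add_sub_cancel p u⟩

end OrderedGroup

theorem Icc_zero_smul {G k : Type*} [AddCommGroup G] [Preorder G] [Field k] [LinearOrder k]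
    [IsStrictOrderedRing k] [Module k G] [PosSMulMono k G] {c : k} (hc : 0 < c) (a : G) :
    Icc 0 (c • a) = c • Icc 0 a := by
  ext u
  rw [mem_smul_set_iff_inv_smul_mem₀ hc.ne']
  constructor
  · rintro ⟨hu0, hua⟩
    refine ⟨smul_nonneg (inv_nonneg.2 hc.le) hu0, ?_⟩
    simpa [inv_smul_smul₀ hc.ne'] using smul_le_smul_of_nonneg_left hua (inv_nonneg.2 hc.le)
  · rintro ⟨hu0, hua⟩
    refine ⟨?_, ?_⟩
    · simpa [smul_inv_smul₀ hc.ne'] using smul_nonneg hc.le hu0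
    · simpa [smul_inv_smul₀ hc.ne'] using smul_le_smul_of_nonneg_left hua hc.le

namespace obDual

variable {V : Type*} [AddCommGroup V] [Module ℝ V] [Preorder V]

theorem le_def {f g : obDual V} : f ≤ g ↔ ∀ x : V, 0 ≤ x → f.1 x ≤ g.1 x := Iff.rfl

theorem nonneg_iff {f : obDual V} : 0 ≤ f ↔ ∀ x : V, 0 ≤ x → 0 ≤ f.1 x := by
  simp [le_def]

instance : AddLeftMono (obDual V) :=
  ⟨fun h _ _ hfg x hx => by simpa using add_le_add_left (hfg x hx) (h.1 x)⟩

instance : PosSMulMono ℝ (obDual V) :=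
  ⟨fun _ hc _ _ hfg x hx => by simpa using mul_le_mul_of_nonneg_left (hfg x hx) hc⟩

theorem bddAbove_image_Icc (f : obDual V) (a b : V) : BddAbove (f.1 '' Icc a b) := by
  obtain ⟨_, M, hM⟩ := f.2 (Icc a b) ⟨a, b, fun _ hx => hx⟩
  exact ⟨M, fun _ hy => (hM _ hy).2⟩

variable [AddLeftMono V]

theorem apply_mono {f : obDual V} (hf : 0 ≤ f) {x y : V} (hxy : x ≤ y) : f.1 x ≤ f.1 y := by
  simpa using nonneg_iff.1 hf (y - x) (sub_nonneg.2 hxy)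

theorem mem_of_nonneg {L : V →ₗ[ℝ] ℝ} (hL : ∀ x : V, 0 ≤ x → 0 ≤ L x) : L ∈ obDual V := by
  rintro S ⟨a, b, hab⟩
  refine ⟨L a, L b, ?_⟩
  rintro _ ⟨x, hx, rfl⟩
  constructor
  · simpa using hL _ (sub_nonneg.2 (hab x hx).1)
  · simpa using hL _ (sub_nonneg.2 (hab x hx).2)

theorem le_antisymm (hV : HasPosParts V) {f g : obDual V} (hfg : f ≤ g) (hgf : g ≤ f) :
    f = g := by
  refine Subtype.ext (LinearMap.ext fun x => ?_)
  obtain ⟨a, b, ha, hb, rfl⟩ := hV.exists_sub x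
  simp only [map_sub]
  rw [_root_.le_antisymm (hfg a ha) (hgf a ha), _root_.le_antisymm (hfg b hb) (hgf b hb)]

end obDual

section ConeExtension

variable {V : Type*} [AddCommGroup V] [Module ℝ V] [Preorder V] [AddLeftMono V]
  [PosSMulMono ℝ V]

theorem HasPosParts.exists_linearMap_eq_on_nonneg (hV : HasPosParts V) (p : V → ℝ)
    (hadd : ∀ ⦃a b : V⦄, 0 ≤ a → 0 ≤ b → p (a + b) = p a + p b)
    (hsmul : ∀ ⦃c : ℝ⦄ ⦃a : V⦄, 0 < c → 0 ≤ a → p (c • a) = c * p a) :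
    ∃ L : V →ₗ[ℝ] ℝ, ∀ x : V, 0 ≤ x → L x = p x := by
  have hsmul' : ∀ ⦃c : ℝ⦄ ⦃a : V⦄, 0 ≤ c → 0 ≤ a → p (c • a) = c * p a := by
    intro c a hc ha
    rcases hc.lt_or_eq with hc | rfl
    · exact hsmul hc ha
    · simpa using hadd le_rfl le_rfl
  have hwd : ∀ ⦃a b a' b' : V⦄, 0 ≤ a → 0 ≤ b → 0 ≤ a' → 0 ≤ b' → a - b = a' - b' →
      p a - p b = p a' - p b' := by
    intro a b a' b' ha hb ha' hb' h
    have h' := congrArg p (sub_eq_sub_iff_add_eq_add.1 h)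
    rw [hadd ha hb', hadd ha' hb] at h'
    linarith
  choose A B hA hB hAB using hV.exists_sub
  refine ⟨{ toFun := fun x => p (A x) - p (B x), map_add' := ?_, map_smul' := ?_ }, ?_⟩
  · intro x y
    rw [hwd (hA _) (hB _) (add_nonneg (hA x) (hA y)) (add_nonneg (hB x) (hB y))
        (by rw [hAB, ← sub_add_sub_comm, hAB, hAB]),
      hadd (hA x) (hA y), hadd (hB x) (hB y)]
    ring
  · intro c x
    simp only [RingHom.id_apply, smul_eq_mul]
    rcases le_total 0 c with hc | hc
    · rw [hwd (hA _) (hB _) (smul_nonneg hc (hA x)) (smul_nonneg hc (hB x))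
          (by rw [hAB, ← smul_sub, hAB]), hsmul' hc (hA x), hsmul' hc (hB x)]
      ring
    · have hc' : 0 ≤ -c := neg_nonneg.2 hc
      rw [hwd (hA _) (hB _) (smul_nonneg hc' (hB x)) (smul_nonneg hc' (hA x))
          (by rw [hAB, ← smul_sub, neg_smul, ← smul_neg, neg_sub, hAB]),
        hsmul' hc' (hA x), hsmul' hc' (hB x)]
      ring
  · intro x hx
    have h0 : p 0 = 0 := by simpa using hadd le_rfl le_rfl
    simpa [h0] using hwd (hA x) (hB x) hx le_rfl (by rw [hAB, sub_zero])

end ConeExtension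

namespace obDual

variable {V : Type*} [AddCommGroup V] [Module ℝ V] [Preorder V] [AddLeftMono V]
  [PosSMulMono ℝ V]

/-- Riesz–Kantorovich: `f⁺ x = sup f [0, x]` for `x ≥ 0`. -/
theorem hasPosParts (hV : HasPosParts V) : HasPosParts (obDual V) := by
  intro f
  have hne : ∀ x : V, 0 ≤ x → (f.1 '' Icc 0 x).Nonempty :=
    fun x hx => ⟨_, mem_image_of_mem _ (left_mem_Icc.2 hx)⟩
  have hle : ∀ ⦃u x : V⦄, u ∈ Icc 0 x → f.1 u ≤ sSup (f.1 '' Icc 0 x) :=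
    fun _ _ hu => le_csSup (bddAbove_image_Icc f _ _) (mem_image_of_mem _ hu)
  obtain ⟨L, hL⟩ := hV.exists_linearMap_eq_on_nonneg (fun x => sSup (f.1 '' Icc 0 x))
    (fun a b ha hb => by
      simp only [hV.Icc_zero_add ha hb, image_add]
      exact csSup_add (hne a ha) (bddAbove_image_Icc f _ _) (hne b hb)
        (bddAbove_image_Icc f _ _))
    (fun c a hc _ => by
      simp only [Icc_zero_smul hc, image_smul_set]
      exact Real.sSup_smul_of_nonneg hc.le _)
  have hL0 : ∀ x : V, 0 ≤ x → 0 ≤ L x := fun x hx => by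
    simpa [hL x hx] using hle (left_mem_Icc.2 hx)
  refine ⟨⟨L, mem_of_nonneg hL0⟩, mem_upperBounds_pair.2 ⟨fun x hx => ?_, nonneg_iff.2 hL0⟩,
    fun g hg x hx => ?_⟩
  · simpa [hL x hx] using hle (right_mem_Icc.2 hx)
  · obtain ⟨hfg, hg0⟩ := mem_upperBounds_pair.1 hg
    show L x ≤ g.1 x
    rw [hL x hx]
    refine csSup_le (hne x hx) ?_
    rintro _ ⟨u, hu, rfl⟩
    exact (hfg u hu.1).trans (apply_mono hg0 hu.2)

theorem isGLB_range_apply (hV : HasPosParts V) {ι : Type*} [Preorder ι] [Nonempty ι]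
    [IsDirected ι (· ≤ ·)] {q : ι → obDual V} (hq : Antitone q) (hq0 : IsGLB (range q) 0)
    {x : V} (hx : 0 ≤ x) : IsGLB (range fun i => (q i).1 x) 0 := by
  have hpos : ∀ i, 0 ≤ q i := fun i => hq0.1 ⟨i, rfl⟩
  have hbdd : ∀ y : V, 0 ≤ y → BddBelow (range fun i => (q i).1 y) :=
    fun y hy => ⟨0, by rintro _ ⟨i, rfl⟩; exact nonneg_iff.1 (hpos i) y hy⟩
  obtain ⟨L, hL⟩ := hV.exists_linearMap_eq_on_nonneg (fun y => ⨅ i, (q i).1 y)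
    (fun a b ha hb => by
      refine _root_.le_antisymm ?_ (le_ciInf fun i => ?_)
      · refine le_ciInf_add_ciInf fun i j => ?_
        obtain ⟨k, hik, hjk⟩ := exists_ge_ge i j
        calc ⨅ i, (q i).1 (a + b) ≤ (q k).1 (a + b) := ciInf_le (hbdd _ (add_nonneg ha hb)) k
          _ = (q k).1 a + (q k).1 b := map_add _ _ _
          _ ≤ (q i).1 a + (q j).1 b := add_le_add (hq hik a ha) (hq hjk b hb)
      · simpa using add_le_add (ciInf_le (hbdd a ha) i) (ciInf_le (hbdd b hb) i))
    (fun c a hc _ => by simp [Real.mul_iInf_of_nonneg hc.le])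
  have hL0 : ∀ y : V, 0 ≤ y → 0 ≤ L y := fun y hy => by
    simpa [hL y hy] using Real.iInf_nonneg fun i => nonneg_iff.1 (hpos i) y hy
  have hLq : (⟨L, mem_of_nonneg hL0⟩ : obDual V) ∈ lowerBounds (range q) := by
    rintro _ ⟨i, rfl⟩ y hy
    simpa [hL y hy] using ciInf_le (hbdd y hy) i
  have hinf : ⨅ i, (q i).1 x = 0 := by
    rw [← hL x hx]
    exact _root_.le_antisymm (by simpa using hq0.2 hLq x hx) (hL0 x hx)
  simpa [hinf] using isGLB_ciInf (hbdd x hx)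

end obDual

section Bidual

variable {E : Type*} [AddCommGroup E] [Module ℝ E] [Lattice E] [AddLeftMono E]

theorem obDual.abs_apply_le {f : obDual E} (hf : 0 ≤ f) (x : E) : |f.1 x| ≤ f.1 |x| :=
  abs_le.2 ⟨by simpa using obDual.apply_mono hf (neg_le.1 (neg_le_abs x)),
    obDual.apply_mono hf (le_abs_self x)⟩

theorem QE_add (x y : E) : QE E (x + y) = QE E x + QE E y :=
  Subtype.ext (LinearMap.ext fun f => map_add f.1 x y)

theorem QE_sub (x y : E) : QE E (x - y) = QE E x - QE E y :=
  Subtype.ext (LinearMap.ext fun f => map_sub f.1 x y)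

theorem QE_zero : QE E (0 : E) = 0 :=
  Subtype.ext (LinearMap.ext fun f => map_zero f.1)

theorem QE_nonneg_iff (hle : ∀ x y : E, x ≤ y ↔ QE E x ≤ QE E y) {x : E} :
    0 ≤ QE E x ↔ 0 ≤ x := by
  rw [hle, QE_zero]

theorem QE_nonpos_iff (hle : ∀ x y : E, x ≤ y ↔ QE E x ≤ QE E y) {x : E} :
    QE E x ≤ 0 ↔ x ≤ 0 := by
  rw [hle, QE_zero]

def QEOrderDense (E : Type*) [AddCommGroup E] [Module ℝ E] [Lattice E] [AddLeftMono E] : Prop :=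
  ∀ φ : Bidual E, 0 < φ → ∃ x : E, 0 < QE E x ∧ QE E x ≤ φ

variable [PosSMulMono ℝ E]

theorem hasPosParts_bidual : HasPosParts (Bidual E) :=
  obDual.hasPosParts (obDual.hasPosParts hasPosParts_of_lattice)


theorem QE_le_of_isLUB (hle : ∀ x y : E, x ≤ y ↔ QE E x ≤ QE E y)
    (hdense : QEOrderDense E) {Ψ : Bidual E} {s : E} (hs : IsLUB {x | 0 ≤ x ∧ QE E x ≤ Ψ} s) :
    QE E s ≤ Ψ := by
  by_contra hne
  obtain ⟨Θ, hΘ⟩ := hasPosParts_bidual (QE E s - Ψ)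
  obtain ⟨hsΘ, hΘ0⟩ := mem_upperBounds_pair.1 hΘ.1
  obtain ⟨x, hx0, hxΘ⟩ :=
    hdense Θ (lt_of_le_not_ge hΘ0 fun h => hne (sub_nonpos.1 (hsΘ.trans h)))
  -- `(QE s - Ψ)⁺ ≤ QE (s - d)` for every `d` in the set, so `s - x` is another upper bound
  have hx : ∀ d ∈ {x | 0 ≤ x ∧ QE E x ≤ Ψ}, d ≤ s - x := by
    intro d hd
    have hΘd : Θ ≤ QE E (s - d) := hΘ.2 <| mem_upperBounds_pair.2
      ⟨by rw [QE_sub]; exact sub_le_sub_left hd.2 _,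
        (QE_nonneg_iff hle).2 (sub_nonneg.2 (hs.1 hd))⟩
    exact le_sub_comm.1 ((hle _ _).2 (hxΘ.trans hΘd))
  exact hx0.not_ge ((QE_nonpos_iff hle).2 ((le_sub_self_iff s).1 (hs.2 hx)))

theorem le_QE_of_isLUB (hle : ∀ x y : E, x ≤ y ↔ QE E x ≤ QE E y)
    (hdense : QEOrderDense E) {Ψ : Bidual E} (hΨ : 0 ≤ Ψ) {s : E}
    (hs : IsLUB {x | 0 ≤ x ∧ QE E x ≤ Ψ} s) : Ψ ≤ QE E s := by
  by_contra hne
  have hsΨ := QE_le_of_isLUB hle hdense hs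
  have hs0 : 0 ≤ s := hs.1 ⟨le_rfl, by rwa [QE_zero]⟩
  obtain ⟨x, hx0, hxΨ⟩ := hdense (Ψ - QE E s)
    (lt_of_le_not_ge (sub_nonneg.2 hsΨ) fun h => hne (sub_nonpos.1 h))
  have hsx : s + x ≤ s := hs.1
    ⟨add_nonneg hs0 ((QE_nonneg_iff hle).1 hx0.le),
      by rw [QE_add]; exact le_sub_iff_add_le'.1 hxΨ⟩
  exact hx0.not_ge ((QE_nonpos_iff hle).2 ((add_le_iff_nonpos_right s).1 hsx))

theorem exists_QE_eq_of_nonneg (hle : ∀ x y : E, x ≤ y ↔ QE E x ≤ QE E y)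
    (hdense : QEOrderDense E) (hbDC : BDedekindComplete E) {Ψ : Bidual E} (hΨ : 0 ≤ Ψ) :
    ∃ x : E, QE E x = Ψ := by
  obtain ⟨s, hs⟩ := hbDC {x | 0 ≤ x ∧ QE E x ≤ Ψ} ⟨0, le_rfl, by rwa [QE_zero]⟩
    ⟨Ψ, fun _ h => h.2⟩
  exact ⟨s, obDual.le_antisymm (obDual.hasPosParts hasPosParts_of_lattice)
    (QE_le_of_isLUB hle hdense hs) (le_QE_of_isLUB hle hdense hΨ hs)⟩

theorem exists_QE_eq (hle : ∀ x y : E, x ≤ y ↔ QE E x ≤ QE E y)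
    (hdense : QEOrderDense E) (hbDC : BDedekindComplete E) (Φ : Bidual E) :
    ∃ x : E, QE E x = Φ := by
  obtain ⟨Ψ₁, Ψ₂, hΨ₁, hΨ₂, rfl⟩ := hasPosParts_bidual.exists_sub Φ
  obtain ⟨x₁, rfl⟩ := exists_QE_eq_of_nonneg hle hdense hbDC hΨ₁
  obtain ⟨x₂, rfl⟩ := exists_QE_eq_of_nonneg hle hdense hbDC hΨ₂
  exact ⟨x₁ - x₂, QE_sub x₁ x₂⟩

end Bidual

section Perfect

variable {E : Type u} [AddCommGroup E] [Module ℝ E] [Lattice E] [AddLeftMono E]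

theorem evalN_mem_enBidualSet [PosSMulMono ℝ E] (hEn : ∀ f : obDual E, f ∈ EnSet.{u, v} E)
    (x : E) : evalN.{u, v} E x ∈ EnBidualSet.{u, v} E := by
  refine ⟨fun f g h hfgh => ?_, fun c f g hfg => ?_, fun S ⟨a, b, hab⟩ => ?_,
    fun ι _ _ _ q hq hq0 => ?_⟩
  · simp [evalN, hfgh]
  · simp [evalN, hfg]
  · rw [show evalN.{u, v} E x '' S = (QE E x).1 '' (Subtype.val '' S) by
      rw [image_image]; rfl]
    exact (QE E x).2 _ ⟨a, b, by rintro _ ⟨f, hf, rfl⟩; exact hab f hf⟩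
  · have hq0' : IsGLB (range fun i => (q i).1) 0 :=
      ⟨by rintro _ ⟨i, rfl⟩; exact hq0.1 ⟨i, rfl⟩,
        fun g hg => hq0.2 (show (⟨g, hEn g⟩ : EnSet.{u, v} E) ∈ lowerBounds (range q) by
          rintro _ ⟨i, rfl⟩; exact hg ⟨i, rfl⟩)⟩
    have h := obDual.isGLB_range_apply hasPosParts_of_lattice (fun i j hij => hq hij) hq0'
      (abs_nonneg x)
    refine ⟨by rintro _ ⟨i, rfl⟩; exact abs_nonneg _, fun c hc => h.2 ?_⟩
    rintro _ ⟨i, rfl⟩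
    exact (hc ⟨i, rfl⟩).trans (obDual.abs_apply_le (hq0.1 ⟨i, rfl⟩) x)

theorem exists_evalN_eq [PosSMulMono ℝ E] (hle : ∀ x y : E, x ≤ y ↔ QE E x ≤ QE E y)
    (hdense : QEOrderDense E) (hbDC : BDedekindComplete E)
    (hEn : ∀ f : obDual E, f ∈ EnSet.{u, v} E) {φ : EnSet.{u, v} E → ℝ}
    (hφ : φ ∈ EnBidualSet.{u, v} E) : ∃ x : E, evalN.{u, v} E x = φ := by
  obtain ⟨hadd, hsmul, hbdd, -⟩ := hφ
  let Φ : obDual E →ₗ[ℝ] ℝ :=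
    { toFun := fun f => φ ⟨f, hEn f⟩
      map_add' := fun f g => hadd _ _ _ rfl
      map_smul' := fun c f => hsmul c _ _ rfl }
  have hΦ : Φ ∈ obDual (obDual E) := by
    rintro S ⟨a, b, hab⟩
    rw [show Φ '' S = φ '' ((fun f => ⟨f, hEn f⟩) '' S) by rw [image_image]; rfl]
    exact hbdd _ ⟨⟨a, hEn a⟩, ⟨b, hEn b⟩, by rintro _ ⟨f, hf, rfl⟩; exact hab f hf⟩
  obtain ⟨x, hx⟩ := exists_QE_eq hle hdense hbDC ⟨Φ, hΦ⟩
  exact ⟨x, funext fun f => congrArg (fun Ψ : Bidual E => Ψ.1 f.1) hx⟩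

end Perfect

/-- if `Q_E : E → E^~~` is a lattice embedding with order dense range, `E` is
`b`-Dedekind complete and every order bounded functional on `E` is order continuous
(`E^~ = E_n^~`), then `E` is perfect: the canonical map `E → (E_n^~)_n^~` is a lattice
isomorphism onto `(E_n^~)_n^~` (a bijection onto `(E_n^~)_n^~` which is an order
isomorphism, hence a lattice isomorphism). -/
theorem perfect_of_bDedekindComplete_of_orderContinuousDual
    {E : Type u} [AddCommGroup E] [Module ℝ E] [Lattice E]
    [CovariantClass E E (· + ·) (· ≤ ·)] [PosSMulMono ℝ E]
    (hemb : QLatticeEmbedding E)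
    (hdense : ∀ φ : Bidual E, 0 < φ → ∃ x : E, 0 < QE E x ∧ QE E x ≤ φ)
    (hbDC : BDedekindComplete E)
    (hEn : ∀ f : ↥(obDual E), f ∈ EnSet.{u, v} E) :
    (∀ x : E, evalN.{u, v} E x ∈ EnBidualSet.{u, v} E) ∧
      Function.Injective (evalN.{u, v} E) ∧
      Set.range (evalN.{u, v} E) = EnBidualSet.{u, v} E ∧
      ∀ x y : E, x ≤ y ↔
        ∀ f : ↥(EnSet.{u, v} E), (0 : ↥(obDual E)) ≤ (f : ↥(obDual E)) →
          evalN.{u, v} E x f ≤ evalN.{u, v} E y f := by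
  obtain ⟨hinj, hle, -⟩ := hemb
  refine ⟨evalN_mem_enBidualSet hEn, fun x y hxy => hinj ?_, ?_, fun x y => ?_⟩
  · exact Subtype.ext (LinearMap.ext fun f => congrFun hxy ⟨f, hEn f⟩)
  · exact (range_subset_iff.2 (evalN_mem_enBidualSet hEn)).antisymm
      fun φ hφ => exists_evalN_eq hle hdense hbDC hEn hφ
  · exact (hle x y).trans ⟨fun h f hf => h f.1 hf, fun h f hf => h ⟨f, hEn f⟩ hf⟩
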